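/- arXiv:2107.12594 — 2 statements merged into one kernel-verified Lean document; each statement's English description precedes it below -/
import Mathlib

section
/- Let m ≥ 1 and let d_A, d_B be integers with 1 ≤ d_A, d_B ≤ q^m. Let A, B ⊆ {0,…,q-1}^m be the exponent sets defining Hyp_q(d_A,m) and Hyp_q(d_B,m), and let A + B = {a + b : a ∈ A, b ∈ B} denote their Minkowski sum. Then the F_q-span of the evaluation vectors ev(X^c), c ∈ A + B, is contained in Hyp_q(d_A + d_B - q^m, m) (where Hyp_q(d,m) with d ≤ 1 is all of F_q^n). -/
open MvPolynomial Finset Pointwise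

noncomputable section

/-- Evaluation of a multivariate polynomial at all points of `F^m`. -/
def evalPt {F : Type} [Field F] {m : ℕ} (f : MvPolynomial (Fin m) F) : (Fin m → F) → F :=
  fun P => MvPolynomial.eval P f

/-- The monomial code `C_A = ev(F_q[A])`, the evaluations of the polynomials
whose monomial support is contained in `A`. -/
def monomialCode (F : Type) [Field F] (m : ℕ) (A : Set (Fin m →₀ ℕ)) :
    Set ((Fin m → F) → F) :=
  { v | ∃ f : MvPolynomial (Fin m) F, (↑f.support : Set (Fin m →₀ ℕ)) ⊆ A ∧ v = evalPt f }

/-- Exponent set of the Reed–Muller code `RM_q(s,m)` (empty when `s < 0`). -/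
def RMset (q m : ℕ) (s : ℤ) : Set (Fin m →₀ ℕ) :=
  { i | (∀ j, i j < q) ∧ (∑ j, (i j : ℤ)) ≤ s }

/-- Exponent set of the hyperbolic code `Hyp_q(d,m)`. -/
def Hypset (q m d : ℕ) : Set (Fin m →₀ ℕ) :=
  { i | (∀ j, i j < q) ∧ d ≤ ∏ j, (q - i j) }

/-- Exponent set of the cube code `Cube_q(s,m)`. -/
def Cubeset (m s : ℕ) : Set (Fin m →₀ ℕ) :=
  { i | ∀ j, i j ≤ s }

/-- Minimum distance of a code: least Hamming weight of a nonzero codeword. -/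
def minDist {F : Type} [Field F] [Fintype F] [DecidableEq F] {m : ℕ}
    (C : Set ((Fin m → F) → F)) : ℕ :=
  sInf { w | ∃ v ∈ C, v ≠ 0 ∧ hammingNorm v = w }

/-- Hamming distance from a word to a code. -/
def distToCode {F : Type} [Field F] [Fintype F] [DecidableEq F] {m : ℕ}
    (y : (Fin m → F) → F) (C : Set ((Fin m → F) → F)) : ℕ :=
  sInf { w | ∃ c ∈ C, hammingDist y c = w }

/-- `i`-fold Minkowski sum of `H` with itself (`0`-fold sum is `{0}`). -/
def iMink {m : ℕ} (H : Set (Fin m →₀ ℕ)) : ℕ → Set (Fin m →₀ ℕ)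
  | 0 => {0}
  | i + 1 => iMink H i + H

/-- The sets `L(d,r,i)` from the Geil–Matsumoto list-decoding algorithm. -/
def Lset (q m d r i : ℕ) : Set (Fin m →₀ ℕ) :=
  { a | (∀ j, a j < q) ∧ ∀ x ∈ iMink (Hypset q m d) i, a + x ∈ Hypset q m (r + 1) }

/-! Over `𝔽_q` the functions `x ↦ x ^ e` and `x ↦ x ^ e'` agree when `e'` is `e` reduced into
`[1, q - 1]` (or `e = e' = 0`), so `ev(X^(a+b)) = ev(X^c)` for an exponent `c` with `c_j < q`
and `c_j ≤ a_j + b_j`. With `x_j = q - a_j`, `y_j = q - b_j` this gives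
`q - c_j ≥ max(1, x_j + y_j - q)`, and the elementary inequality `x X + y Y - N M ≤ z Z` for such
"footprints", applied coordinate by coordinate, yields `∏ x_j + ∏ y_j - q ^ m ≤ ∏ (q - c_j)`. -/

section Inequality

variable {R : Type*} [CommRing R] [LinearOrder R] [IsStrictOrderedRing R]

lemma mul_add_mul_sub_mul_le_mul {N M x y X Y z Z : R} (hx1 : 1 ≤ x) (hxN : x ≤ N)
    (hy1 : 1 ≤ y) (hyN : y ≤ N) (hX1 : 1 ≤ X) (hXM : X ≤ M) (hY1 : 1 ≤ Y) (hYM : Y ≤ M)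
    (hz1 : 1 ≤ z) (hz : x + y - N ≤ z) (hZ1 : 1 ≤ Z) (hZ : X + Y - M ≤ Z) :
    x * X + y * Y - N * M ≤ z * Z := by
  -- If `x + y ≤ N + 1` the left side is at most `X + Y - M ≤ Z ≤ z * Z`, symmetrically if
  -- `X + Y ≤ M + 1`; otherwise it is at most `(x + y - N) * (X + Y - M)`.
  rcases le_or_gt (x + y) (N + 1) with hxy | hxy
  · have : x * X + y * Y - N * M ≤ X + Y - M := by
      nlinarith [mul_nonneg (sub_nonneg.2 hXM) (sub_nonneg.2 hx1),
        mul_nonneg (sub_nonneg.2 hYM) (sub_nonneg.2 hy1),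
        mul_nonneg (by linarith : (0 : R) ≤ N + 1 - (x + y)) (by linarith : (0 : R) ≤ M)]
    nlinarith [mul_nonneg (sub_nonneg.2 hz1) (by linarith : (0 : R) ≤ Z)]
  rcases le_or_gt (X + Y) (M + 1) with hXY | hXY
  · have : x * X + y * Y - N * M ≤ x + y - N := by
      nlinarith [mul_nonneg (sub_nonneg.2 hxN) (sub_nonneg.2 hX1),
        mul_nonneg (sub_nonneg.2 hyN) (sub_nonneg.2 hY1),
        mul_nonneg (by linarith : (0 : R) ≤ M + 1 - (X + Y)) (by linarith : (0 : R) ≤ N)]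
    nlinarith [mul_nonneg (sub_nonneg.2 hZ1) (by linarith : (0 : R) ≤ z)]
  · have : (x + y - N) * (X + Y - M) ≤ z * Z :=
      mul_le_mul hz hZ (by linarith) (by linarith)
    nlinarith [mul_nonneg (sub_nonneg.2 hxN) (sub_nonneg.2 hYM),
      mul_nonneg (sub_nonneg.2 hyN) (sub_nonneg.2 hXM)]

lemma prod_add_prod_sub_pow_card_le_prod {ι : Type*} {N : R} {x y z : ι → R} {s : Finset ι}
    (hx : ∀ i ∈ s, 1 ≤ x i ∧ x i ≤ N) (hy : ∀ i ∈ s, 1 ≤ y i ∧ y i ≤ N)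
    (hz : ∀ i ∈ s, 1 ≤ z i ∧ x i + y i - N ≤ z i) :
    (∏ i ∈ s, x i) + (∏ i ∈ s, y i) - N ^ s.card ≤ ∏ i ∈ s, z i := by
  induction s using Finset.cons_induction with
  | empty => simp
  | cons a s ha ih =>
    simp only [Finset.forall_mem_cons] at hx hy hz
    have prod_le_pow {w : ι → R} (hw : ∀ i ∈ s, 1 ≤ w i ∧ w i ≤ N) :
        ∏ i ∈ s, w i ≤ N ^ s.card :=
      (Finset.prod_le_prod (fun i hi => zero_le_one.trans (hw i hi).1)
        fun i hi => (hw i hi).2).trans_eq (Finset.prod_const N)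
    rw [Finset.prod_cons, Finset.prod_cons, Finset.prod_cons, Finset.card_cons, pow_succ']
    exact mul_add_mul_sub_mul_le_mul hx.1.1 hx.1.2 hy.1.1 hy.1.2
      (Finset.one_le_prod fun i hi => (hx.2 i hi).1) (prod_le_pow hx.2)
      (Finset.one_le_prod fun i hi => (hy.2 i hi).1) (prod_le_pow hy.2)
      hz.1.1 hz.1.2 (Finset.one_le_prod fun i hi => (hz.2 i hi).1) (ih hx.2 hy.2 hz.2)

end Inequality

lemma Nat.cast_prod_sub {R ι : Type*} [CommRing R] {s : Finset ι} {q : ℕ} {a : ι → ℕ}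
    (ha : ∀ i ∈ s, a i ≤ q) : ((∏ i ∈ s, (q - a i) : ℕ) : R) = ∏ i ∈ s, ((q : R) - a i) := by
  rw [Nat.cast_prod]
  exact Finset.prod_congr rfl fun i hi => Nat.cast_sub (ha i hi)

lemma mem_Hypset_add_sub_pow {q m dA dB : ℕ} {a b c : Fin m →₀ ℕ} (ha : a ∈ Hypset q m dA)
    (hb : b ∈ Hypset q m dB) (hcq : ∀ j, c j < q) (hcab : ∀ j, c j ≤ a j + b j) :
    c ∈ Hypset q m (dA + dB - q ^ m) := by
  obtain ⟨haq, hdA⟩ := ha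
  obtain ⟨hbq, hdB⟩ := hb
  refine ⟨hcq, ?_⟩
  have key := prod_add_prod_sub_pow_card_le_prod (N := (q : ℤ)) (s := Finset.univ)
    (x := fun j => (q : ℤ) - a j) (y := fun j => (q : ℤ) - b j) (z := fun j => (q : ℤ) - c j)
    (fun j _ => by have := haq j; omega) (fun j _ => by have := hbq j; omega)
    (fun j _ => by have := hcq j; have := hcab j; omega)
  rw [Finset.card_univ, Fintype.card_fin] at key
  rw [Nat.sub_le_iff_le_add, ← Nat.cast_le (α := ℤ), Nat.cast_add, Nat.cast_add,
    Nat.cast_pow, Nat.cast_prod_sub fun j _ => (hcq j).le]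
  have hA : (dA : ℤ) ≤ ∏ j, ((q : ℤ) - a j) := by
    rw [← Nat.cast_prod_sub fun j _ => (haq j).le]
    exact_mod_cast hdA
  have hB : (dB : ℤ) ≤ ∏ j, ((q : ℤ) - b j) := by
    rw [← Nat.cast_prod_sub fun j _ => (hbq j).le]
    exact_mod_cast hdB
  linarith

/-- Since `x ^ (q - 1) = 1` for `x ≠ 0` in `𝔽_q`, a positive exponent may be reduced
to the representative of its class modulo `q - 1` in `[1, q - 1]`. -/
def reduceExp (q : ℕ) : ℕ → ℕ
  | 0 => 0
  | e + 1 => e % (q - 1) + 1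

lemma reduceExp_zero (q : ℕ) : reduceExp q 0 = 0 := rfl

lemma reduceExp_le (q e : ℕ) : reduceExp q e ≤ e := by
  cases e with
  | zero => rfl
  | succ e => exact Nat.succ_le_succ (Nat.mod_le e (q - 1))

lemma reduceExp_lt {q : ℕ} (hq : 1 < q) (e : ℕ) : reduceExp q e < q := by
  cases e with
  | zero => exact zero_lt_one.trans hq
  | succ e =>
    have := Nat.mod_lt e (show 0 < q - 1 by omega)
    simp only [reduceExp]
    omega

lemma pow_reduceExp {F : Type*} [Field F] [Fintype F] (a : F) (e : ℕ) :
    a ^ reduceExp (Fintype.card F) e = a ^ e := by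
  cases e with
  | zero => rfl
  | succ e =>
    rcases eq_or_ne a 0 with rfl | ha
    · simp only [reduceExp, zero_pow (Nat.succ_ne_zero _)]
    · have hsplit : a ^ (e + 1) = a ^ (e % (Fintype.card F - 1) + 1) *
          (a ^ (Fintype.card F - 1)) ^ (e / (Fintype.card F - 1)) := by
        rw [← pow_mul, ← pow_add, add_right_comm, Nat.mod_add_div]
      rw [hsplit, FiniteField.pow_card_sub_one_eq_one a ha, one_pow, mul_one]
      rfl

def reduceExps {σ : Type*} (q : ℕ) (c : σ →₀ ℕ) : σ →₀ ℕ :=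
  c.mapRange (reduceExp q) (reduceExp_zero q)

lemma evalPt_monomial_reduceExps {F : Type} [Field F] [Fintype F] {m : ℕ} (c : Fin m →₀ ℕ) :
    evalPt (monomial (reduceExps (Fintype.card F) c) (1 : F)) = evalPt (monomial c 1) := by
  funext P
  simp only [evalPt, eval_monomial, one_mul, reduceExps]
  rw [Finsupp.prod_mapRange_index fun j => pow_zero (P j)]
  exact Finset.prod_congr rfl fun j _ => pow_reduceExp (P j) (c j)

lemma monomialCode_eq_map_restrictSupport (F : Type) [Field F] (m : ℕ) (A : Set (Fin m →₀ ℕ)) :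
    monomialCode F m A = (restrictSupport F A).map (evalₗ F (Fin m)) := by
  ext v
  simp only [monomialCode, Submodule.map_coe, Set.mem_image, Set.mem_ofPred_eq, SetLike.mem_coe,
    mem_restrictSupport_iff]
  exact exists_congr fun f => and_congr_right' eq_comm

theorem statement16_general (F : Type) [Field F] [Fintype F]
    (q m dA dB : ℕ) (hq : Fintype.card F = q) :
    (↑(Submodule.span F { v : (Fin m → F) → F |
        ∃ c ∈ Hypset q m dA + Hypset q m dB,
          v = evalPt (MvPolynomial.monomial c (1 : F)) }) : Set ((Fin m → F) → F)) ⊆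
      monomialCode F m (Hypset q m (dA + dB - q ^ m)) := by
  subst hq
  rw [monomialCode_eq_map_restrictSupport, SetLike.coe_subset_coe, Submodule.span_le]
  rintro _ ⟨_, ⟨a, ha, b, hb, rfl⟩, rfl⟩
  have hred : reduceExps (Fintype.card F) (a + b) ∈
      Hypset (Fintype.card F) m (dA + dB - Fintype.card F ^ m) :=
    mem_Hypset_add_sub_pow ha hb (fun j => reduceExp_lt Fintype.one_lt_card _)
      fun j => reduceExp_le _ _
  exact ⟨_, (monomial_mem_restrictSupport F).2 (Or.inl hred), evalPt_monomial_reduceExps (a + b)⟩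

/-- the span of the evaluations of the monomials `X^c`, `c` in the Minkowski
sum of the exponent sets of `Hyp_q(d_A,m)` and `Hyp_q(d_B,m)`, is contained in
`Hyp_q(d_A + d_B - q^m, m)`. -/
theorem statement16 (F : Type) [Field F] [Fintype F] [DecidableEq F]
    (q m dA dB : ℕ) (hq : Fintype.card F = q) (hm : 1 ≤ m)
    (hdA1 : 1 ≤ dA) (hdA2 : dA ≤ q ^ m) (hdB1 : 1 ≤ dB) (hdB2 : dB ≤ q ^ m) :
    (↑(Submodule.span F { v : (Fin m → F) → F |
        ∃ c ∈ Hypset q m dA + Hypset q m dB,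
          v = evalPt (MvPolynomial.monomial c (1 : F)) }) : Set ((Fin m → F) → F)) ⊆
      monomialCode F m (Hypset q m (dA + dB - q ^ m)) :=
  statement16_general F q m dA dB hq
end
end

section
/- Let m = 2 and let d be an integer with q < d ≤ q^2. Set a = ⌊q - d/q⌋ and b = q - d/(q-a) (a real number), and let r be an integer with 1 ≤ r < a - b + 1. Then for every integer i ≥ 1 with ia ≤ q-1, L(d,r,i) = {0,…,q-1-ia}^2; equivalently, the monomial code C_{L(d,r,i)} is the cube code Cube_q(q-1-ia, 2). -/
open MvPolynomial Finset Pointwise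

noncomputable section

/-!
Write `c = q - a`. The choice `a = ⌊q - d/q⌋` makes `a` the largest coordinate of a point of
`Hyp_q(d,2)`, attained by `a e₁` and `a e₂`; hence `iH` lies in the box `[0, ia]²` and contains
`ia e₁, ia e₂`. The latter forces `L(d,r,i)` into the cube `[0, q-1-ia]²`. Conversely, adding to
a point of the cube an element of `(i-1)H` and some `y ∈ H` leaves a box of size
`(a - y₁ + 1)(a - y₂ + 1)`, and `r < a - b + 1`, i.e. `(r + c - 1)c < d`, makes this exceed `r`
because `(c + a - y₁)(c + a - y₂) ≥ d`.
-/

lemma mem_iMink_succ {m : ℕ} {H : Set (Fin m →₀ ℕ)} {i : ℕ} {x : Fin m →₀ ℕ} :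
    x ∈ iMink H (i + 1) ↔ ∃ z ∈ iMink H i, ∃ y ∈ H, z + y = x :=
  Set.mem_add

lemma le_mul_of_mem_iMink {m : ℕ} {H : Set (Fin m →₀ ℕ)} {a : ℕ}
    (hH : ∀ y ∈ H, ∀ j, y j ≤ a) :
    ∀ {i} {x}, x ∈ iMink H i → ∀ j, x j ≤ i * a
  | 0, x, hx, j => by simp_all [iMink]
  | i + 1, _, hx, j => by
    obtain ⟨z, hz, y, hy, rfl⟩ := mem_iMink_succ.1 hx
    rw [Finsupp.add_apply, Nat.succ_mul]
    exact Nat.add_le_add (le_mul_of_mem_iMink hH hz j) (hH y hy j)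

lemma single_mul_mem_iMink {m : ℕ} {H : Set (Fin m →₀ ℕ)} {j : Fin m} {a : ℕ}
    (hs : Finsupp.single j a ∈ H) : ∀ i, Finsupp.single j (i * a) ∈ iMink H i
  | 0 => by simp [iMink]
  | i + 1 => by
    rw [Nat.succ_mul, Finsupp.single_add]
    exact Set.add_mem_add (single_mul_mem_iMink hs i) hs

lemma Lset_subset_Cubeset {q m d r i a : ℕ}
    (hsingle : ∀ j, Finsupp.single j a ∈ Hypset q m d) :
    Lset q m d r i ⊆ Cubeset m (q - 1 - i * a) := by
  intro v ⟨_, hv⟩ j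
  have hlt := (hv _ (single_mul_mem_iMink (hsingle j) i)).1 j
  rw [Finsupp.add_apply, Finsupp.single_eq_same] at hlt
  omega

lemma le_sub_mul_of_mem_Hypset_two {q d : ℕ} {y : Fin 2 →₀ ℕ} (hy : y ∈ Hypset q 2 d)
    (j : Fin 2) : d ≤ (q - y j) * q := by
  have hd := hy.2
  rw [Fin.prod_univ_two] at hd
  fin_cases j
  · exact hd.trans (Nat.mul_le_mul_left _ (Nat.sub_le _ _))
  · exact hd.trans ((Nat.mul_le_mul_right _ (Nat.sub_le _ _)).trans_eq (mul_comm _ _))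

lemma single_mem_Hypset_two {q d a : ℕ} (ha : a < q) (hd : d ≤ (q - a) * q) (j : Fin 2) :
    Finsupp.single j a ∈ Hypset q 2 d := by
  refine ⟨fun k => ?_, ?_⟩
  · rcases eq_or_ne j k with rfl | hne
    · simpa using ha
    · simpa [Finsupp.single_eq_of_ne' hne] using ha.pos
  · rw [Fin.prod_univ_two]
    fin_cases j
    · simpa using hd
    · simpa [mul_comm] using hd

lemma lt_succ_mul_succ_of_le_add_mul_add {c d r s t : ℕ} (hc : 1 ≤ c)
    (hr : (r + c) * c < d + c) (hd : d ≤ (c + s) * (c + t)) : r < (s + 1) * (t + 1) := by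
  have hst : (c + s) * (c + t) ≤ c * (c + s + t + s * t) := by
    nlinarith [Nat.le_mul_of_pos_left (s * t) hc]
  have : (r + c) * c < (c + s + t + s * t + 1) * c := by nlinarith
  have := lt_of_mul_lt_mul_right this (Nat.zero_le c)
  nlinarith

lemma Cubeset_subset_Lset {q d r i a : ℕ} (hi : 1 ≤ i) (hia : i * a ≤ q - 1) (haq : a < q)
    (hbound : ∀ y ∈ Hypset q 2 d, ∀ j, y j ≤ a)
    (hr : (r + (q - a)) * (q - a) < d + (q - a)) :
    Cubeset 2 (q - 1 - i * a) ⊆ Lset q 2 d r i := by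
  intro v hv
  obtain ⟨k, rfl⟩ : ∃ k, i = k + 1 := ⟨i - 1, by omega⟩
  rw [Nat.succ_mul] at hia hv
  refine ⟨fun j => by have := hv j; omega, fun x hx => ?_⟩
  obtain ⟨z, hz, y, hy, rfl⟩ := mem_iMink_succ.1 hx
  have hslack : ∀ j, (v + (z + y)) j < q ∧ a - y j + 1 ≤ q - (v + (z + y)) j := fun j => by
    have := hv j
    have := le_mul_of_mem_iMink hbound hz j
    have := hbound y hy j
    rw [Finsupp.add_apply, Finsupp.add_apply]
    generalize k * a = M at *
    omega
  have hd : d ≤ (q - a + (a - y 0)) * (q - a + (a - y 1)) := by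
    have := hy.2
    rw [Fin.prod_univ_two] at this
    have := hbound y hy 0
    have := hbound y hy 1
    rwa [show q - a + (a - y 0) = q - y 0 by omega, show q - a + (a - y 1) = q - y 1 by omega]
  refine ⟨fun j => (hslack j).1, ?_⟩
  rw [Fin.prod_univ_two]
  calc r + 1 ≤ (a - y 0 + 1) * (a - y 1 + 1) :=
        lt_succ_mul_succ_of_le_add_mul_add (by omega) hr hd
    _ ≤ _ := Nat.mul_le_mul (hslack 0).2 (hslack 1).2

lemma le_floor_sub_div_iff {q d : ℕ} (hq : 0 < q) (hd : d ≤ q * q) (u : ℕ) :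
    u ≤ ⌊(q : ℝ) - d / q⌋₊ ↔ u * q + d ≤ q * q := by
  have hqR : (0 : ℝ) < q := by exact_mod_cast hq
  have hsub : (q : ℝ) - d / q = (q * q - d) / q := by field_simp
  have hnonneg : (0 : ℝ) ≤ (q * q - d) / q := by
    apply div_nonneg _ hqR.le
    rw [sub_nonneg]
    exact_mod_cast hd
  rw [hsub, Nat.le_floor_iff hnonneg, le_div_iff₀ hqR, le_sub_iff_add_le]
  norm_cast

lemma add_mul_lt_add_of_lt_div {r c d : ℕ} (hc : 0 < c) (h : (r : ℝ) < d / c - c + 1) :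
    (r + c) * c < d + c := by
  have hcR : (0 : ℝ) < c := by exact_mod_cast hc
  have : ((r : ℝ) + c - 1) * c < d := by
    rw [← lt_div_iff₀ hcR]
    linarith
  exact_mod_cast (by linarith : ((r : ℝ) + c) * c < d + c)

theorem statement19_general (q d : ℕ) (hd1 : q < d) (hd2 : d ≤ q ^ 2)
    (a : ℕ) (ha : a = ⌊(q : ℝ) - (d : ℝ) / (q : ℝ)⌋₊)
    (b : ℝ) (hb : b = (q : ℝ) - (d : ℝ) / ((q : ℝ) - (a : ℝ)))
    (r : ℕ) (hr2 : (r : ℝ) < (a : ℝ) - b + 1)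
    (i : ℕ) (hi : 1 ≤ i) (hia : i * a ≤ q - 1) :
    Lset q 2 d r i = Cubeset 2 (q - 1 - i * a) := by
  have hq0 : 0 < q := by nlinarith
  have hfloor : ∀ u, u ≤ a ↔ u * q + d ≤ q * q := ha ▸ le_floor_sub_div_iff hq0 (by nlinarith)
  have haq : a < q := by nlinarith [(hfloor a).1 le_rfl]
  have hdq : d ≤ (q - a) * q := by
    have := (hfloor a).1 le_rfl
    rw [Nat.sub_mul]
    omega
  have hbound : ∀ y ∈ Hypset q 2 d, ∀ j, y j ≤ a := fun y hy j => by
    have hyd := le_sub_mul_of_mem_Hypset_two hy j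
    rw [Nat.sub_mul] at hyd
    rw [hfloor]
    omega
  have hr : (r + (q - a)) * (q - a) < d + (q - a) := by
    refine add_mul_lt_add_of_lt_div (by omega) ?_
    rw [Nat.cast_sub haq.le]
    linarith
  exact (Lset_subset_Cubeset (single_mem_Hypset_two haq hdq)).antisymm
    (Cubeset_subset_Lset hi hia haq hbound hr)

/-- for `q < d ≤ q²`, `a = ⌊q - d/q⌋`, `b = q - d/(q-a)`,
`1 ≤ r < a - b + 1` and every `i ≥ 1` with `ia ≤ q-1`,
`L(d,r,i) = {0,…,q-1-ia}²` (the exponent set of `Cube_q(q-1-ia,2)`). -/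
theorem statement19 (q d : ℕ) (hq : IsPrimePow q) (hd1 : q < d) (hd2 : d ≤ q ^ 2)
    (a : ℕ) (ha : a = ⌊(q : ℝ) - (d : ℝ) / (q : ℝ)⌋₊)
    (b : ℝ) (hb : b = (q : ℝ) - (d : ℝ) / ((q : ℝ) - (a : ℝ)))
    (r : ℕ) (hr1 : 1 ≤ r) (hr2 : (r : ℝ) < (a : ℝ) - b + 1)
    (i : ℕ) (hi : 1 ≤ i) (hia : i * a ≤ q - 1) :
    Lset q 2 d r i = Cubeset 2 (q - 1 - i * a) :=
  statement19_general q d hd1 hd2 a ha b hb r hr2 i hi hia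
end
end
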